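/- arXiv:2301.08167 — 8 statements merged into one kernel-verified Lean document; each statement's English description precedes it below -/
import Mathlib

section
/- Let N ≥ 1 and let d_1, …, d_N be positive integers. Let ρ be a density matrix on the N-fold tensor product ℂ^{d_1} ⊗ ⋯ ⊗ ℂ^{d_N}, i.e. a positive semidefinite complex matrix of trace 1 whose rows and columns are indexed by the product type (Fin d_1) × ⋯ × (Fin d_N). For each x let φ_x ∈ ℂ^{d_x} be a unit vector, and let ρ_x denote the reduced density matrix of ρ on the x-th factor, obtained by the partial trace over all other factors, (ρ_x)_{i j} = Σ_{k} ρ_{(…,i,…;k),(…,j,…;k)} where the sum runs over all configurations k of the remaining indices. Then ⟨φ_1 ⊗ ⋯ ⊗ φ_N | ρ | φ_1 ⊗ ⋯ ⊗ φ_N⟩ ≤ (1/N) Σ_{x=1}^N ⟨φ_x | ρ_x | φ_x⟩. (In the paper's terminology: the global cost C_{global,pure} is bounded above by the local cost C_{local,pure}.) -/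
/-!
Fix a factor `x` and write the product vector as `φ x ⊗ c`, where `c = ⊗_{y ≠ x} φ y` is a unit
vector. Compressing `ρ` by `φ x` gives a positive semidefinite matrix `σ` on the other factors
with `⟨φ x ⊗ c| ρ |φ x ⊗ c⟩ = ⟨c| σ |c⟩` and `tr σ = ⟨φ x| ρ_x |φ x⟩`. Writing `σ = Cᴴ C`,
Cauchy–Schwarz applied to each row of `C` gives `⟨c| σ |c⟩ ≤ ‖c‖² tr σ`. So the global fidelity is
at most every local fidelity, hence at most their average.
-/

open scoped ComplexOrder
open Finset Matrix

theorem Complex.normSq_sum_mul_le {n : Type*} [Fintype n] (z w : n → ℂ) :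
    normSq (∑ i, z i * w i) ≤ (∑ i, normSq (z i)) * ∑ i, normSq (w i) := by
  simp only [← Complex.sq_norm]
  calc ‖∑ i, z i * w i‖ ^ 2 ≤ (∑ i, ‖z i‖ * ‖w i‖) ^ 2 := by
        gcongr
        exact (norm_sum_le _ _).trans_eq (by simp only [norm_mul])
    _ ≤ _ := sum_mul_sq_le_sq_mul_sq _ _ _

theorem Matrix.star_dotProduct_mulVec_eq_sum {n R : Type*} [Fintype n] [CommSemiring R]
    [StarRing R] (A : Matrix n n R) (u : n → R) :
    star u ⬝ᵥ (A *ᵥ u) = ∑ k, ∑ k', starRingEnd R (u k) * A k k' * u k' := by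
  simp [dotProduct, mulVec, mul_sum, mul_assoc, starRingEnd_apply]

theorem Matrix.re_star_dotProduct_self {n : Type*} [Fintype n] (v : n → ℂ) :
    (star v ⬝ᵥ v).re = ∑ i, Complex.normSq (v i) := by
  simp [dotProduct, Complex.re_sum, Complex.normSq_apply]

open scoped MatrixOrder in
theorem Matrix.PosSemidef.re_dotProduct_mulVec_le_trace {n : Type*} [Fintype n]
    [DecidableEq n] {σ : Matrix n n ℂ} (hσ : σ.PosSemidef) (b : n → ℂ) :
    (star b ⬝ᵥ (σ *ᵥ b)).re ≤ (∑ j, Complex.normSq (b j)) * σ.trace.re := by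
  obtain ⟨C, rfl⟩ := CStarAlgebra.nonneg_iff_eq_star_mul_self.mp hσ.nonneg
  have hquad : star b ⬝ᵥ ((star C * C) *ᵥ b) = star (C *ᵥ b) ⬝ᵥ (C *ᵥ b) := by
    rw [← mulVec_mulVec, dotProduct_mulVec, star_mulVec, star_eq_conjTranspose]
  have htrace : (star C * C).trace.re = ∑ l, ∑ j, Complex.normSq (C l j) := by
    rw [sum_comm]
    simp [trace, mul_apply, Complex.re_sum, Complex.normSq_apply]
  rw [hquad, re_star_dotProduct_self, htrace, mul_sum]
  refine sum_le_sum fun l _ => ?_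
  rw [mul_comm]
  exact Complex.normSq_sum_mul_le _ _

def Matrix.partialTraceRight {α β R : Type*} [Fintype β] [AddCommMonoid R]
    (ρ : Matrix (α × β) (α × β) R) : Matrix α α R :=
  of fun i i' => ∑ j, ρ (i, j) (i', j)

section Bipartite

variable {α β : Type*} [Fintype β] [DecidableEq β]

def Matrix.tensorLeft (a : α → ℂ) : Matrix (α × β) β ℂ :=
  of fun p j => if p.2 = j then a p.1 else 0

theorem Matrix.tensorLeft_mulVec (a : α → ℂ) (b : β → ℂ) :
    tensorLeft a *ᵥ b = fun p => a p.1 * b p.2 := by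
  ext p
  simp [tensorLeft, mulVec, dotProduct, ite_mul]

-- The `(β := β)` annotations keep `*` from elaborating at `CStarMatrix`.
theorem Matrix.trace_conjTranspose_tensorLeft_mul_mul [Fintype α]
    (ρ : Matrix (α × β) (α × β) ℂ) (a : α → ℂ) :
    ((tensorLeft (β := β) a)ᴴ * ρ * tensorLeft (β := β) a).trace
      = star a ⬝ᵥ (ρ.partialTraceRight *ᵥ a) := by
  simp only [tensorLeft, trace, mul_apply, partialTraceRight, dotProduct, mulVec,
    Fintype.sum_prod_type, conjTranspose_apply, of_apply, diag_apply, Pi.star_apply,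
    RCLike.star_def, apply_ite, map_zero, ite_mul, zero_mul, mul_zero, sum_mul, mul_sum,
    sum_ite_eq', mem_univ, if_true]
  rw [sum_comm]
  conv_lhs => enter [2, v]; rw [sum_comm]
  rw [sum_comm]
  exact sum_congr rfl fun u _ => sum_congr rfl fun v _ => sum_congr rfl fun j _ => by ring

theorem Matrix.PosSemidef.re_dotProduct_mulVec_tensor_le_partialTrace [Fintype α]
    {ρ : Matrix (α × β) (α × β) ℂ} (hρ : ρ.PosSemidef) (a : α → ℂ) (b : β → ℂ) :
    (star (fun p => a p.1 * b p.2) ⬝ᵥ (ρ *ᵥ fun p => a p.1 * b p.2)).re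
      ≤ (∑ j, Complex.normSq (b j)) * (star a ⬝ᵥ (ρ.partialTraceRight *ᵥ a)).re := by
  have hcompress (B : Matrix (α × β) β ℂ) :
      star (B *ᵥ b) ⬝ᵥ (ρ *ᵥ (B *ᵥ b)) = star b ⬝ᵥ ((Bᴴ * ρ * B) *ᵥ b) := by
    rw [star_mulVec, ← mulVec_mulVec, ← mulVec_mulVec, dotProduct_mulVec (star b) Bᴴ]
  rw [← tensorLeft_mulVec, hcompress, ← trace_conjTranspose_tensorLeft_mul_mul]
  exact (hρ.conjTranspose_mul_mul_same _).re_dotProduct_mulVec_le_trace b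

end Bipartite

theorem Matrix.star_comp_dotProduct_mulVec_comp {ι κ : Type*} [Fintype ι] [Fintype κ]
    (ρ : Matrix ι ι ℂ) (e : ι ≃ κ) (u : κ → ℂ) :
    star (u ∘ e) ⬝ᵥ (ρ *ᵥ (u ∘ e)) = star u ⬝ᵥ (ρ.submatrix e.symm e.symm *ᵥ u) := by
  rw [submatrix_mulVec_equiv, Equiv.symm_symm, dotProduct_comp_equiv_symm]
  rfl

section Multipartite

variable {ι : Type*} [DecidableEq ι] {κ : ι → Type*}

theorem Equiv.update_piSplitAt_symm (x : ι) (i j : κ x) (m : ∀ y : {y // y ≠ x}, κ y) :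
    Function.update ((piSplitAt x κ).symm (i, m)) x j = (piSplitAt x κ).symm (j, m) := by
  ext y
  by_cases hy : y = x
  · subst hy; simp
  · simp [hy]

variable [Fintype ι] [∀ i, Fintype (κ i)]

def Matrix.reduced (ρ : Matrix (∀ i, κ i) (∀ i, κ i) ℂ) (x : ι) : Matrix (κ x) (κ x) ℂ :=
  (ρ.submatrix (Equiv.piSplitAt x κ).symm (Equiv.piSplitAt x κ).symm).partialTraceRight

theorem Matrix.reduced_apply [∀ i, DecidableEq (κ i)] (ρ : Matrix (∀ i, κ i) (∀ i, κ i) ℂ)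
    (x : ι) (i j : κ x) :
    ρ.reduced x i j = ∑ k : ∀ y, κ y, if k x = i then ρ k (Function.update k x j) else 0 := by
  rw [← (Equiv.piSplitAt x κ).symm.sum_comp, Fintype.sum_prod_type]
  simp [reduced, partialTraceRight, Equiv.update_piSplitAt_symm]

theorem Matrix.PosSemidef.re_dotProduct_mulVec_prod_le_reduced
    {ρ : Matrix (∀ i, κ i) (∀ i, κ i) ℂ} (hρ : ρ.PosSemidef) (φ : ∀ i, κ i → ℂ)
    (hφ : ∀ i, ∑ j, Complex.normSq (φ i j) = 1) (x : ι) :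
    (star (fun k => ∏ y, φ y (k y)) ⬝ᵥ (ρ *ᵥ fun k => ∏ y, φ y (k y))).re
      ≤ (star (φ x) ⬝ᵥ (ρ.reduced x *ᵥ φ x)).re := by
  classical
  set e := Equiv.piSplitAt x κ
  have hsplit : (fun k => ∏ y, φ y (k y))
      = (fun p => φ x p.1 * ∏ y : {y // y ≠ x}, φ y (p.2 y)) ∘ e := by
    ext k
    exact Fintype.prod_eq_mul_prod_subtype_ne (fun y => φ y (k y)) x
  have hunit : ∑ m : ∀ y : {y // y ≠ x}, κ y,
      Complex.normSq (∏ y : {y // y ≠ x}, φ y (m y)) = 1 := by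
    simp only [map_prod]
    rw [← Fintype.prod_sum fun (y : {y // y ≠ x}) (j : κ y) => Complex.normSq (φ y j)]
    exact prod_eq_one fun y _ => hφ y
  have hcompress := (hρ.submatrix e.symm).re_dotProduct_mulVec_tensor_le_partialTrace (φ x)
    (fun m => ∏ y : {y // y ≠ x}, φ y (m y))
  rw [hunit, one_mul] at hcompress
  rwa [hsplit, star_comp_dotProduct_mulVec_comp]

end Multipartite

theorem global_cost_le_local_cost_general
    (N : ℕ) (hN : 1 ≤ N) (d : Fin N → ℕ)
    (ρ : Matrix ((x : Fin N) → Fin (d x)) ((x : Fin N) → Fin (d x)) ℂ)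
    (hρ : ρ.PosSemidef)
    (φ : (x : Fin N) → Fin (d x) → ℂ)
    (hφ : ∀ x, ∑ i, Complex.normSq (φ x i) = 1)
    (M : (x : Fin N) → Matrix (Fin (d x)) (Fin (d x)) ℂ)
    (hM : ∀ (x : Fin N) (i j : Fin (d x)), M x i j =
      ∑ k : (y : Fin N) → Fin (d y),
        if k x = i then ρ k (Function.update k x j) else 0) :
    (∑ k : (y : Fin N) → Fin (d y), ∑ k' : (y : Fin N) → Fin (d y),
        (starRingEnd ℂ) (∏ y, φ y (k y)) * ρ k k' * ∏ y, φ y (k' y)).re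
      ≤ (1 / N) * ∑ x, (∑ i, ∑ j, (starRingEnd ℂ) (φ x i) * M x i j * φ x j).re := by
  have hMred : M = ρ.reduced := funext fun x => ext fun i j => by rw [hM, reduced_apply]
  simp only [← star_dotProduct_mulVec_eq_sum, hMred]
  have hsum :=
    card_nsmul_le_sum univ _ _ fun x _ => hρ.re_dotProduct_mulVec_prod_le_reduced φ hφ x
  rw [card_univ, Fintype.card_fin, nsmul_eq_mul] at hsum
  have hNpos : (0 : ℝ) < N := by exact_mod_cast hN
  rw [one_div, ← div_eq_inv_mul, le_div_iff₀ hNpos]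
  linarith

/-- **Global cost is bounded by local cost.**
For a density matrix `ρ` on the `N`-fold tensor product `ℂ^{d 1} ⊗ ⋯ ⊗ ℂ^{d N}`
(indexed by the product type `(x : Fin N) → Fin (d x)`), unit vectors `φ x`,
and reduced density matrices `M x` (obtained from `ρ` by tracing out all factors
other than the `x`-th), the global fidelity `⟨⊗φ | ρ | ⊗φ⟩` is at most the
average of the local fidelities `⟨φ x | M x | φ x⟩`. -/
theorem global_cost_le_local_cost
    (N : ℕ) (hN : 1 ≤ N) (d : Fin N → ℕ) (hd : ∀ x, 0 < d x)
    (ρ : Matrix ((x : Fin N) → Fin (d x)) ((x : Fin N) → Fin (d x)) ℂ)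
    (hρ : ρ.PosSemidef) (htr : ρ.trace = 1)
    (φ : (x : Fin N) → Fin (d x) → ℂ)
    (hφ : ∀ x, ∑ i, Complex.normSq (φ x i) = 1)
    (M : (x : Fin N) → Matrix (Fin (d x)) (Fin (d x)) ℂ)
    (hM : ∀ (x : Fin N) (i j : Fin (d x)), M x i j =
      ∑ k : (y : Fin N) → Fin (d y),
        if k x = i then ρ k (Function.update k x j) else 0) :
    (∑ k : (y : Fin N) → Fin (d y), ∑ k' : (y : Fin N) → Fin (d y),
        (starRingEnd ℂ) (∏ y, φ y (k y)) * ρ k k' * ∏ y, φ y (k' y)).re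
      ≤ (1 / N) * ∑ x, (∑ i, ∑ j, (starRingEnd ℂ) (φ x i) * M x i j * φ x j).re :=
  global_cost_le_local_cost_general N hN d ρ hρ φ hφ M hM
end

section
/- Let ρ be a positive semidefinite complex matrix indexed by (Fin m × Fin n) × (Fin m × Fin n), and let tr_B ρ be its partial trace over the second factor, defined by (tr_B ρ)_{i j} = Σ_{k ∈ Fin n} ρ_{(i,k),(j,k)}. Then for every unit vector φ ∈ ℂ^m and every unit vector χ ∈ ℂ^n, ⟨φ ⊗ χ | ρ | φ ⊗ χ⟩ ≤ ⟨φ | tr_B ρ | φ⟩, where (φ ⊗ χ)_{(i,k)} = φ_i χ_k. -/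
/-! Write `φ ⊗ χ = ∑ₖ χₖ (φ ⊗ eₖ)`. Factoring `ρ = Cᴴ C` turns the quadratic form `⟨x|ρ|x⟩` into
`‖C x‖²`, so by the triangle and Cauchy–Schwarz inequalities the left side is at most
`(∑ₖ |χₖ|²) ∑ₖ ‖C (φ ⊗ eₖ)‖² = ∑ₖ ⟨φ ⊗ eₖ|ρ|φ ⊗ eₖ⟩`, and the last sum is `⟨φ|tr_B ρ|φ⟩`. -/

open scoped ComplexOrder

open Matrix

theorem norm_sum_smul_sq_le {ι 𝕜 E : Type*} [Fintype ι] [SeminormedRing 𝕜]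
    [SeminormedAddCommGroup E] [Module 𝕜 E] [IsBoundedSMul 𝕜 E] (c : ι → 𝕜) (x : ι → E) :
    ‖∑ k, c k • x k‖ ^ 2 ≤ (∑ k, ‖c k‖ ^ 2) * ∑ k, ‖x k‖ ^ 2 :=
  calc ‖∑ k, c k • x k‖ ^ 2 ≤ (∑ k, ‖c k‖ * ‖x k‖) ^ 2 := by
        gcongr
        exact (norm_sum_le _ _).trans (Finset.sum_le_sum fun k _ => norm_smul_le _ _)
    _ ≤ (∑ k, ‖c k‖ ^ 2) * ∑ k, ‖x k‖ ^ 2 := Finset.sum_mul_sq_le_sq_mul_sq _ _ _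

theorem sum_sum_star_mul_mul_eq_star_dotProduct_mulVec {ι R : Type*} [Fintype ι]
    [NonUnitalSemiring R] [StarRing R] (A : Matrix ι ι R) (x : ι → R) :
    ∑ p, ∑ q, star (x p) * A p q * x q = star x ⬝ᵥ A *ᵥ x := by
  simp only [dotProduct, mulVec, Finset.mul_sum, Pi.star_apply, mul_assoc]

namespace Matrix

variable {ι 𝕜 : Type*} [Fintype ι] [RCLike 𝕜]

theorem re_star_dotProduct_conjTranspose_mul_self_mulVec (C : Matrix ι ι 𝕜) (x : ι → 𝕜) :
    RCLike.re (star x ⬝ᵥ (Cᴴ * C) *ᵥ x) = ‖WithLp.toLp 2 (C *ᵥ x)‖ ^ 2 := by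
  rw [← mulVec_mulVec, dotProduct_mulVec, ← star_mulVec, @norm_sq_eq_re_inner 𝕜,
    EuclideanSpace.inner_toLp_toLp, dotProduct_comm]

theorem PosSemidef.re_star_dotProduct_mulVec_sum_smul_le {κ : Type*} [Fintype κ]
    {ρ : Matrix ι ι 𝕜} (hρ : ρ.PosSemidef) (c : κ → 𝕜) (v : κ → ι → 𝕜) :
    RCLike.re (star (∑ k, c k • v k) ⬝ᵥ ρ *ᵥ ∑ k, c k • v k)
      ≤ (∑ k, ‖c k‖ ^ 2) * ∑ k, RCLike.re (star (v k) ⬝ᵥ ρ *ᵥ v k) := by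
  classical
  obtain ⟨C, rfl⟩ : ∃ C : Matrix ι ι 𝕜, ρ = Cᴴ * C := by
    open scoped MatrixOrder in
    exact CStarAlgebra.nonneg_iff_eq_star_mul_self.mp hρ.nonneg
  rw [re_star_dotProduct_conjTranspose_mul_self_mulVec]
  simp only [mulVec_sum, mulVec_smul, WithLp.toLp_sum, WithLp.toLp_smul,
    re_star_dotProduct_conjTranspose_mul_self_mulVec]
  exact norm_sum_smul_sq_le _ _

end Matrix

def vecTensor {ι κ R : Type*} [Mul R] (φ : ι → R) (χ : κ → R) : ι × κ → R :=
  fun p => φ p.1 * χ p.2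

section vecTensor

variable {ι κ R : Type*} [Fintype κ] [DecidableEq κ]

theorem vecTensor_eq_sum_smul_single [CommSemiring R] (φ : ι → R) (χ : κ → R) :
    vecTensor φ χ = ∑ k, χ k • vecTensor φ (Pi.single k 1) := by
  ext p
  simp [vecTensor, Finset.sum_apply, Pi.single_apply, mul_comm]

theorem star_vecTensor_single_dotProduct_mulVec [Fintype ι] [Semiring R] [StarRing R]
    (A : Matrix (ι × κ) (ι × κ) R) (φ : ι → R) (k : κ) :
    star (vecTensor φ (Pi.single k 1)) ⬝ᵥ A *ᵥ vecTensor φ (Pi.single k 1)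
      = ∑ i, ∑ j, star (φ i) * A (i, k) (j, k) * φ j := by
  rw [← sum_sum_star_mul_mul_eq_star_dotProduct_mulVec]
  simp [vecTensor, Fintype.sum_prod_type, Pi.single_apply, apply_ite star]

end vecTensor

def Matrix.traceRight {ι κ R : Type*} [Fintype κ] [AddCommMonoid R]
    (A : Matrix (ι × κ) (ι × κ) R) : Matrix ι ι R :=
  Matrix.of fun i j => ∑ k, A (i, k) (j, k)

theorem Matrix.star_dotProduct_traceRight_mulVec {ι κ R : Type*} [Fintype ι] [Fintype κ]
    [DecidableEq κ] [Semiring R] [StarRing R] (A : Matrix (ι × κ) (ι × κ) R) (φ : ι → R) :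
    star φ ⬝ᵥ A.traceRight *ᵥ φ
      = ∑ k, star (vecTensor φ (Pi.single k 1)) ⬝ᵥ A *ᵥ vecTensor φ (Pi.single k 1) := by
  simp only [star_vecTensor_single_dotProduct_mulVec]
  rw [← sum_sum_star_mul_mul_eq_star_dotProduct_mulVec]
  simp only [traceRight, of_apply, Finset.mul_sum, Finset.sum_mul]
  exact (Finset.sum_congr rfl fun _ _ => Finset.sum_comm).trans Finset.sum_comm

theorem tensor_qform_le_partial_trace_qform_general
    (m n : ℕ) (ρ : Matrix (Fin m × Fin n) (Fin m × Fin n) ℂ)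
    (hρ : ρ.PosSemidef)
    (trB : Matrix (Fin m) (Fin m) ℂ)
    (htrB : ∀ i j, trB i j = ∑ k : Fin n, ρ (i, k) (j, k))
    (φ : Fin m → ℂ)
    (χ : Fin n → ℂ) (hχ : ∑ k, Complex.normSq (χ k) = 1) :
    (∑ p : Fin m × Fin n, ∑ q : Fin m × Fin n,
        (starRingEnd ℂ) (φ p.1 * χ p.2) * ρ p q * (φ q.1 * χ q.2)).re
      ≤ (∑ i, ∑ j, (starRingEnd ℂ) (φ i) * trB i j * φ j).re := by
  obtain rfl : trB = ρ.traceRight := Matrix.ext htrB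
  have hχ' : ∑ k, ‖χ k‖ ^ 2 = 1 := by simpa only [Complex.sq_norm] using hχ
  calc _ = RCLike.re (star (vecTensor φ χ) ⬝ᵥ ρ *ᵥ vecTensor φ χ) :=
        congrArg Complex.re (sum_sum_star_mul_mul_eq_star_dotProduct_mulVec ρ (vecTensor φ χ))
    _ ≤ ∑ k, RCLike.re
          (star (vecTensor φ (Pi.single k 1)) ⬝ᵥ ρ *ᵥ vecTensor φ (Pi.single k 1)) := by
        rw [vecTensor_eq_sum_smul_single φ χ]
        simpa only [hχ', one_mul] using hρ.re_star_dotProduct_mulVec_sum_smul_le χ _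
    _ = _ := by
        rw [← map_sum, ← star_dotProduct_traceRight_mulVec,
          ← sum_sum_star_mul_mul_eq_star_dotProduct_mulVec]
        rfl

/-- **Data processing under partial trace, pure-state case.**
For a positive semidefinite `ρ` on `ℂ^m ⊗ ℂ^n` (indexed by `Fin m × Fin n`),
with partial trace `trB` over the second factor, and unit vectors `φ`, `χ`,
we have `⟨φ ⊗ χ | ρ | φ ⊗ χ⟩ ≤ ⟨φ | trB ρ | φ⟩`. -/
theorem tensor_qform_le_partial_trace_qform
    (m n : ℕ) (ρ : Matrix (Fin m × Fin n) (Fin m × Fin n) ℂ)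
    (hρ : ρ.PosSemidef)
    (trB : Matrix (Fin m) (Fin m) ℂ)
    (htrB : ∀ i j, trB i j = ∑ k : Fin n, ρ (i, k) (j, k))
    (φ : Fin m → ℂ) (hφ : ∑ i, Complex.normSq (φ i) = 1)
    (χ : Fin n → ℂ) (hχ : ∑ k, Complex.normSq (χ k) = 1) :
    (∑ p : Fin m × Fin n, ∑ q : Fin m × Fin n,
        (starRingEnd ℂ) (φ p.1 * χ p.2) * ρ p q * (φ q.1 * χ q.2)).re
      ≤ (∑ i, ∑ j, (starRingEnd ℂ) (φ i) * trB i j * φ j).re :=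
  tensor_qform_le_partial_trace_qform_general m n ρ hρ trB htrB φ χ hχ
end

section
/- (No perfect quantum multiplication.) Let a ∈ ℝ with a ∉ {0, 1, −1}, and let I ⊆ ℝ be an open set containing the points 0, π/2, π and 3π/2. Then there is no ℂ-linear map T : Matrix (Fin 2) (Fin 2) ℂ → Matrix (Fin 2) (Fin 2) ℂ such that T(ρ_θ) = ρ_{aθ} for all θ ∈ I. (In particular no quantum channel can implement θ ↦ aθ on relative phases, since every channel is linear.) -/
/-!
Every entry of `T ρ_θ` is, by linearity, a combination `p + q e^{iθ} + r e^{-iθ}`, and every such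
function is killed by `D³ + D`. On a neighbourhood of `0` the `(1,0)` entry must equal
`e^{iaθ}/2`, on which `D³ + D` acts as multiplication by `i(a - a³)`; comparing derivatives at `0`
gives `a³ = a`.
-/

/-- The equatorial qubit state `ρ_θ = |θ⟩⟨θ|` with `|θ⟩ = (e₀ + e^{iθ} e₁)/√2`. -/
noncomputable def equatorialState (θ : ℝ) : Matrix (Fin 2) (Fin 2) ℂ :=
  !![1 / 2, Complex.exp (-(θ : ℂ) * Complex.I) / 2;
     Complex.exp ((θ : ℂ) * Complex.I) / 2, 1 / 2]

open Complex Filter Topology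

theorem hasDerivAt_cexp_mul_ofReal (b : ℂ) (x : ℝ) :
    HasDerivAt (fun θ : ℝ => exp (b * θ)) (b * exp (b * x)) x := by
  simpa [mul_comm] using ((hasDerivAt_id (x : ℂ)).const_mul b).cexp.comp_ofReal

theorem iteratedDeriv_sum_mul_cexp {ι : Type*} (s : Finset ι) (q b : ι → ℂ) (n : ℕ) :
    iteratedDeriv n (fun θ : ℝ => ∑ k ∈ s, q k * exp (b k * θ)) =
      fun θ : ℝ => ∑ k ∈ s, q k * b k ^ n * exp (b k * θ) := by
  induction n with
  | zero => simp
  | succ n ih =>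
    funext x
    rw [iteratedDeriv_succ, ih]
    refine (HasDerivAt.fun_sum fun k _ => (hasDerivAt_cexp_mul_ofReal (b k) x).const_mul
      (q k * b k ^ n)).deriv.trans ?_
    simp only [pow_succ]
    exact Finset.sum_congr rfl fun k _ => by ring

theorem iteratedDeriv_mul_cexp (c b : ℂ) (n : ℕ) :
    iteratedDeriv n (fun θ : ℝ => c * exp (b * θ)) = fun θ : ℝ => c * b ^ n * exp (b * θ) := by
  simpa using iteratedDeriv_sum_mul_cexp (Finset.univ : Finset Unit) (fun _ => c) (fun _ => b) n

theorem cube_eq_self_of_eventuallyEq_cexp {p q r c : ℂ} {a x : ℝ} (hc : c ≠ 0)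
    (h : (fun θ : ℝ => p + q * exp (I * θ) + r * exp (-I * θ)) =ᶠ[𝓝 x]
      fun θ : ℝ => c * exp (a * I * θ)) :
    a ^ 3 = a := by
  have hsum : (fun θ : ℝ => p + q * exp (I * θ) + r * exp (-I * θ)) =
      fun θ : ℝ => ∑ k : Fin 3, ![p, q, r] k * exp (![0, I, -I] k * θ) := by
    simp [Fin.sum_univ_three]
  rw [hsum] at h
  have hderiv (n : ℕ) := (h.iteratedDeriv n).eq_of_nhds
  simp only [iteratedDeriv_sum_mul_cexp, iteratedDeriv_mul_cexp] at hderiv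
  have h31 := congrArg₂ (· + ·) (hderiv 3) (hderiv 1)
  simp [Fin.sum_univ_three] at h31
  have hprod : c * exp (a * I * x) * I * ((a : ℂ) ^ 3 - a) = 0 := by
    linear_combination h31 + I * (c * exp (a * I * x) * a ^ 3 + r * exp (-(I * x))) * I_sq
  have hne : c * exp (a * I * x) * I ≠ 0 := by simp [hc, I_ne_zero, exp_ne_zero]
  exact_mod_cast sub_eq_zero.mp ((mul_eq_zero.mp hprod).resolve_left hne)

theorem equatorialState_eq (θ : ℝ) :
    equatorialState θ = (1 / 2 : ℂ) • 1 + exp (I * θ) • Matrix.single 1 0 (1 / 2) +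
      exp (-I * θ) • Matrix.single 0 1 (1 / 2) := by
  ext i j
  fin_cases i <;> fin_cases j <;> simp [equatorialState, mul_comm, div_eq_mul_inv]

theorem equatorialState_one_zero (θ : ℝ) : equatorialState θ 1 0 = 1 / 2 * exp (I * θ) := by
  simp [equatorialState, mul_comm, div_eq_inv_mul]

theorem LinearMap.equatorialState_apply
    (T : Matrix (Fin 2) (Fin 2) ℂ →ₗ[ℂ] Matrix (Fin 2) (Fin 2) ℂ) (i j : Fin 2) (θ : ℝ) :
    T (equatorialState θ) i j = T 1 i j / 2 + T (Matrix.single 1 0 (1 / 2)) i j * exp (I * θ)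
      + T (Matrix.single 0 1 (1 / 2)) i j * exp (-I * θ) := by
  simp only [equatorialState_eq, map_add, map_smul, Matrix.add_apply, Matrix.smul_apply,
    smul_eq_mul]
  ring

theorem no_perfect_quantum_multiplication_general
    (a : ℝ) (ha0 : a ≠ 0) (ha1 : a ≠ 1) (haneg1 : a ≠ -1)
    (S : Set ℝ) (hS : IsOpen S)
    (h0 : (0 : ℝ) ∈ S) :
    ¬ ∃ T : Matrix (Fin 2) (Fin 2) ℂ →ₗ[ℂ] Matrix (Fin 2) (Fin 2) ℂ,
        ∀ θ ∈ S, T (equatorialState θ) = equatorialState (a * θ) := by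
  rintro ⟨T, hT⟩
  have hnear : (fun θ : ℝ => T 1 1 0 / 2 + T (Matrix.single 1 0 (1 / 2)) 1 0 * exp (I * θ)
        + T (Matrix.single 0 1 (1 / 2)) 1 0 * exp (-I * θ)) =ᶠ[𝓝 0]
      fun θ : ℝ => 1 / 2 * exp (a * I * θ) := by
    filter_upwards [hS.mem_nhds h0] with θ hθ
    rw [← T.equatorialState_apply, hT θ hθ, equatorialState_one_zero]
    push_cast
    ring_nf
  have hcube := cube_eq_self_of_eventuallyEq_cexp (by norm_num) hnear
  have hfactor : a * ((a - 1) * (a + 1)) = 0 := by linear_combination hcube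
  simp [sub_eq_zero, add_eq_zero_iff_eq_neg, ha0, ha1, haneg1] at hfactor

/-- **No perfect quantum multiplication.**
For `a ∉ {0, 1, -1}` and an open set `S ⊆ ℝ` containing `0, π/2, π, 3π/2`,
there is no `ℂ`-linear map on `2×2` matrices sending `ρ_θ` to `ρ_{aθ}` for all
`θ ∈ S`. -/
theorem no_perfect_quantum_multiplication
    (a : ℝ) (ha0 : a ≠ 0) (ha1 : a ≠ 1) (haneg1 : a ≠ -1)
    (S : Set ℝ) (hS : IsOpen S)
    (h0 : (0 : ℝ) ∈ S) (h1 : Real.pi / 2 ∈ S) (h2 : Real.pi ∈ S)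
    (h3 : 3 * Real.pi / 2 ∈ S) :
    ¬ ∃ T : Matrix (Fin 2) (Fin 2) ℂ →ₗ[ℂ] Matrix (Fin 2) (Fin 2) ℂ,
        ∀ θ ∈ S, T (equatorialState θ) = equatorialState (a * θ) :=
  no_perfect_quantum_multiplication_general a ha0 ha1 haneg1 S hS h0
end

section
/- (No cloning.) Let d ≥ 2. There is no unitary matrix U indexed by (Fin d × Fin d) × (Fin d × Fin d) over ℂ and unit vector e ∈ ℂ^d such that for every unit vector φ ∈ ℂ^d there exists α ∈ ℝ with U · (φ ⊗ e) = e^{iα} · (φ ⊗ φ), where (ψ ⊗ χ)_{(i,j)} = ψ_i χ_j. -/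
/-!
A unitary preserves inner products, and `⟪φ ⊗ e, ψ ⊗ e⟫ = ⟪φ, ψ⟫` while
`⟪φ ⊗ φ, ψ ⊗ ψ⟫ = ⟪φ, ψ⟫²`. Since phases have modulus one, cloning both `φ` and `ψ` forces
`|⟪φ, ψ⟫| = |⟪φ, ψ⟫|²`, i.e. `|⟪φ, ψ⟫| ∈ {0, 1}`. This fails for `φ = e₀` and
`ψ = (3/5) e₀ + (4/5) e₁`.
-/

open Matrix

section

variable {m n R : Type*} [Fintype m] [Fintype n]

theorem star_mulVec_dotProduct_mulVec_of_conjTranspose_mul_self [DecidableEq n] [CommRing R]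
    [StarRing R] {U : Matrix n n R} (hU : Uᴴ * U = 1) (x y : n → R) :
    star (U *ᵥ x) ⬝ᵥ U *ᵥ y = star x ⬝ᵥ y := by
  rw [star_mulVec, dotProduct_mulVec, vecMul_vecMul, hU, vecMul_one]

theorem star_tensor_dotProduct_tensor [CommRing R] [StarRing R] (φ ψ : m → R) (χ ω : n → R) :
    star (fun p : m × n => φ p.1 * χ p.2) ⬝ᵥ (fun p => ψ p.1 * ω p.2) =
      (star φ ⬝ᵥ ψ) * (star χ ⬝ᵥ ω) := by
  simp only [dotProduct, Fintype.sum_prod_type, Finset.sum_mul_sum, Pi.star_apply, star_mul']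
  exact Finset.sum_congr rfl fun _ _ => Finset.sum_congr rfl fun _ _ => by ring

theorem Complex.star_dotProduct_self (v : n → ℂ) :
    star v ⬝ᵥ v = ((∑ i, Complex.normSq (v i) : ℝ) : ℂ) := by
  simp [dotProduct, Complex.normSq_eq_conj_mul_self]

theorem norm_star_dotProduct_eq_sq_of_clones {𝕜 : Type*} [RCLike 𝕜] [DecidableEq n]
    {U : Matrix (n × n) (n × n) 𝕜} (hU : Uᴴ * U = 1) {e φ ψ : n → 𝕜} (he : star e ⬝ᵥ e = 1)
    {a b : 𝕜} (ha : ‖a‖ = 1) (hb : ‖b‖ = 1)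
    (hφ : U *ᵥ (fun p => φ p.1 * e p.2) = a • fun p => φ p.1 * φ p.2)
    (hψ : U *ᵥ (fun p => ψ p.1 * e p.2) = b • fun p => ψ p.1 * ψ p.2) :
    ‖star φ ⬝ᵥ ψ‖ = ‖star φ ⬝ᵥ ψ‖ ^ 2 := by
  have h := star_mulVec_dotProduct_mulVec_of_conjTranspose_mul_self hU
    (fun p => φ p.1 * e p.2) (fun p => ψ p.1 * e p.2)
  rw [hφ, hψ, star_smul, smul_dotProduct, dotProduct_smul, star_tensor_dotProduct_tensor,
    star_tensor_dotProduct_tensor, he, mul_one] at h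
  calc ‖star φ ⬝ᵥ ψ‖ = ‖star a • b • ((star φ ⬝ᵥ ψ) * (star φ ⬝ᵥ ψ))‖ := by rw [h]
    _ = ‖star φ ⬝ᵥ ψ‖ ^ 2 := by simp [ha, hb, sq]

end

/-- **No cloning.**
For `d ≥ 2` there is no unitary matrix `U` on `ℂ^d ⊗ ℂ^d` and unit vector
`e ∈ ℂ^d` such that for every unit vector `φ ∈ ℂ^d` there is a phase `α` with
`U (φ ⊗ e) = e^{iα} (φ ⊗ φ)`. -/
theorem no_cloning (d : ℕ) (hd : 2 ≤ d) :
    ¬ ∃ (U : Matrix (Fin d × Fin d) (Fin d × Fin d) ℂ) (e : Fin d → ℂ),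
        Uᴴ * U = 1 ∧ (∑ i, Complex.normSq (e i)) = 1 ∧
        ∀ φ : Fin d → ℂ, (∑ i, Complex.normSq (φ i)) = 1 →
          ∃ α : ℝ, U.mulVec (fun p => φ p.1 * e p.2)
            = fun p => Complex.exp (Complex.I * (α : ℂ)) * (φ p.1 * φ p.2) := by
  rintro ⟨U, e, hU, he, hclone⟩
  let i₀ : Fin d := ⟨0, by omega⟩
  let i₁ : Fin d := ⟨1, by omega⟩
  have hi : i₀ ≠ i₁ := by simp [i₀, i₁, Fin.ext_iff]
  let φ : Fin d → ℂ := Pi.single i₀ 1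
  let ψ : Fin d → ℂ := Pi.single i₀ (3 / 5) + Pi.single i₁ (4 / 5)
  have hφ : ∑ i, Complex.normSq (φ i) = 1 := by
    simp [φ, apply_ite Complex.normSq, Pi.single_apply]
  have hψ : ∑ i, Complex.normSq (ψ i) = 1 := by
    rw [Fintype.sum_eq_add i₀ i₁ hi fun i hi => by simp [ψ, hi.1, hi.2]]
    simp [ψ, hi, hi.symm, Complex.normSq]
    norm_num
  obtain ⟨α, hα⟩ := hclone φ hφ
  obtain ⟨β, hβ⟩ := hclone ψ hψ
  have key := norm_star_dotProduct_eq_sq_of_clones hU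
    (by rw [Complex.star_dotProduct_self, he, Complex.ofReal_one])
    (Complex.norm_exp_I_mul_ofReal α) (Complex.norm_exp_I_mul_ofReal β) hα hβ
  have hφψ : star φ ⬝ᵥ ψ = 3 / 5 := by simp [φ, ψ, hi.symm]
  rw [hφψ] at key
  norm_num at key
end

section
/- Let T ≥ 2, z : Fin T → ℂ, μ = (1/T)·Σ_t z_t, and p ∈ [0,1]. Then Σ over all nonempty subsets M ⊆ Fin T of p^{|M|}(1−p)^{T−|M|} · |(1/|M|)·Σ_{t∈M} z_t − μ|² = (Σ_t |z_t − μ|²) · ( Σ_{n=1}^{T} p^n (1−p)^{T−n} C(T−1, n−1)/n² − Σ_{n=2}^{T} p^n (1−p)^{T−n} C(T−2, n−2)/n² ), where C(·,·) denotes the binomial coefficient. (Probabilistically: this is the expectation of the squared deviation of the sample mean over a random subset M in which each element of Fin T is included independently with probability p, on the event M ≠ ∅.) -/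
/-!
Centre the data: with `w t = z t - μ` we have `∑ t, w t = 0`, and for nonempty `M` the deviation
of the sample mean is `(∑ t ∈ M, w t) / #M`. Expanding `‖∑ t ∈ M, w t‖ ^ 2` into the inner
products `⟪w s, w t⟫` with `s, t ∈ M` and summing over `M` first, the coefficient of `⟪w s, w t⟫`
is a sum over the supersets of `{s, t}`, which depends only on whether `s = t`: counting
supersets of each size, it is the first binomial sum `A` of the statement on the diagonal and the
second, `B`, off it. The total is therefore `(A - B) ∑ ‖w t‖ ^ 2 + B ‖∑ w t‖ ^ 2`, and the last
term vanishes.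
-/

open Finset
open scoped BigOperators RealInnerProductSpace

theorem Finset.sum_Icc_finset_apply_card {α M : Type*} [DecidableEq α] [AddCommMonoid M]
    {s t : Finset α} (h : s ⊆ t) (f : ℕ → M) :
    ∑ u ∈ Icc s t, f #u = ∑ n ∈ Icc #s #t, (#t - #s).choose (n - #s) • f n := by
  have hdisj : ∀ v ∈ (t \ s).powerset, Disjoint s v := fun v hv =>
    disjoint_of_subset_right (mem_powerset.1 hv) disjoint_sdiff
  have hinj : Set.InjOn (s ∪ ·) ((t \ s).powerset : Set (Finset α)) := fun v hv v' hv' hvv' => by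
    rw [← union_sdiff_cancel_left (hdisj v hv), ← union_sdiff_cancel_left (hdisj v' hv')]
    exact congrArg (· \ s) hvv'
  calc ∑ u ∈ Icc s t, f #u
      = ∑ v ∈ (t \ s).powerset, f (#s + #v) := by
        rw [Icc_eq_image_powerset h, sum_image hinj]
        exact sum_congr rfl fun v hv => by rw [card_union_of_disjoint (hdisj v hv)]
    _ = ∑ m ∈ range (#t - #s + 1), (#t - #s).choose m • f (#s + m) := by
        rw [sum_powerset_apply_card (fun m => f (#s + m)), card_sdiff_of_subset h]
    _ = ∑ n ∈ Icc #s #t, (#t - #s).choose (n - #s) • f n := by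
        rw [← Finset.Ico_add_one_right_eq_Icc, sum_Ico_eq_sum_range,
          Nat.sub_add_comm (card_le_card h)]
        simp only [Nat.add_sub_cancel_left]

theorem Finset.sum_div_card_sub {ι K : Type*} [Field K] [CharZero K] {M : Finset ι}
    (hM : M.Nonempty) (z : ι → K) (μ : K) :
    (∑ i ∈ M, z i) / #M - μ = (∑ i ∈ M, (z i - μ)) / #M := by
  rw [sum_sub_distrib, sum_const, nsmul_eq_mul, sub_div,
    mul_div_cancel_left₀ _ (Nat.cast_ne_zero.2 hM.card_pos.ne')]

section
variable {ι E : Type*} [NormedAddCommGroup E] [InnerProductSpace ℝ E]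

theorem norm_sum_sq_eq_sum_sum_inner (s : Finset ι) (w : ι → E) :
    ‖∑ i ∈ s, w i‖ ^ 2 = ∑ i ∈ s, ∑ j ∈ s, ⟪w i, w j⟫ := by
  rw [← real_inner_self_eq_norm_sq, sum_inner]
  simp only [inner_sum]

theorem sum_sum_inner_mul_ite_eq (s : Finset ι) [DecidableEq ι] (w : ι → E) (a b : ℝ) :
    ∑ i ∈ s, ∑ j ∈ s, ⟪w i, w j⟫ * (if i = j then a else b)
      = (a - b) * ∑ i ∈ s, ‖w i‖ ^ 2 + b * ‖∑ i ∈ s, w i‖ ^ 2 := by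
  have hsplit : ∀ i j, ⟪w i, w j⟫ * (if i = j then a else b)
      = (if i = j then (a - b) * ⟪w i, w j⟫ else 0) + b * ⟪w i, w j⟫ := fun i j => by
    split_ifs <;> ring
  simp only [hsplit, sum_add_distrib, sum_ite_eq, ← mul_sum, norm_sum_sq_eq_sum_sum_inner]
  simp [mul_sum]

variable [Fintype ι] [DecidableEq ι]

theorem sum_mul_norm_sum_sq_eq_sum_sum_inner_mul (K : Finset ι → ℝ) (w : ι → E) :
    ∑ M, K M * ‖∑ i ∈ M, w i‖ ^ 2
      = ∑ i, ∑ j, ⟪w i, w j⟫ * ∑ M ∈ Icc {i, j} univ, K M := by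
  calc ∑ M, K M * ‖∑ i ∈ M, w i‖ ^ 2
      = ∑ M, ∑ ij ∈ M ×ˢ M, K M * ⟪w ij.1, w ij.2⟫ := by
        simp only [norm_sum_sq_eq_sum_sum_inner, sum_product, mul_sum]
    _ = ∑ ij : ι × ι, ∑ M ∈ Icc {ij.1, ij.2} univ, K M * ⟪w ij.1, w ij.2⟫ :=
        sum_comm' fun M ij => by simp [insert_subset_iff]
    _ = ∑ i, ∑ j, ⟪w i, w j⟫ * ∑ M ∈ Icc {i, j} univ, K M := by
        rw [← univ_product_univ, sum_product]
        simp only [mul_sum, mul_comm]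
theorem sum_card_mul_norm_sum_sq_of_sum_eq_zero (K : ℕ → ℝ) (w : ι → E) (hw : ∑ i, w i = 0) :
    ∑ M, K #M * ‖∑ i ∈ M, w i‖ ^ 2
      = (∑ i, ‖w i‖ ^ 2) *
          (∑ n ∈ Icc 1 (Fintype.card ι), (Fintype.card ι - 1).choose (n - 1) • K n
            - ∑ n ∈ Icc 2 (Fintype.card ι), (Fintype.card ι - 2).choose (n - 2) • K n) := by
  have hcoeff : ∀ i j : ι, ∑ M ∈ Icc {i, j} univ, K #M
      = if i = j then ∑ n ∈ Icc 1 (Fintype.card ι), (Fintype.card ι - 1).choose (n - 1) • K n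
        else ∑ n ∈ Icc 2 (Fintype.card ι), (Fintype.card ι - 2).choose (n - 2) • K n := by
    intro i j
    rw [sum_Icc_finset_apply_card (subset_univ _), card_univ]
    split_ifs with hij
    · rw [hij, pair_eq_singleton, card_singleton]
    · rw [card_pair hij]
  simp only [sum_mul_norm_sum_sq_eq_sum_sum_inner_mul, hcoeff, sum_sum_inner_mul_ite_eq, hw,
    norm_zero]
  ring

end

theorem random_subset_mean_variance_general (T : ℕ) (z : Fin T → ℂ)
    (μ : ℂ) (hμ : μ = (∑ t, z t) / (T : ℂ))
    (p : ℝ) :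
    ∑ M ∈ (Finset.univ : Finset (Fin T)).powerset.filter (fun M => M.Nonempty),
        p ^ M.card * (1 - p) ^ (T - M.card) *
          ‖(∑ t ∈ M, z t) / (M.card : ℂ) - μ‖ ^ 2
      = (∑ t, ‖z t - μ‖ ^ 2) *
          ((∑ n ∈ Finset.Icc 1 T,
              p ^ n * (1 - p) ^ (T - n) * ((T - 1).choose (n - 1) : ℝ) / (n ^ 2 : ℝ))
            - (∑ n ∈ Finset.Icc 2 T,
              p ^ n * (1 - p) ^ (T - n) * ((T - 2).choose (n - 2) : ℝ) / (n ^ 2 : ℝ))) := by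
  set K : ℕ → ℝ := fun n => p ^ n * (1 - p) ^ (T - n) / n ^ 2
  have hw : ∑ t, (z t - μ) = 0 := by
    have hμ' : μ = 𝔼 t, z t := by rw [hμ, Fintype.expect_eq_sum_div_card, Fintype.card_fin]
    rw [sum_sub_distrib, sum_const, hμ', card_smul_expect, sub_self]
  have hterm : ∀ M : Finset (Fin T),
      (if M.Nonempty then p ^ #M * (1 - p) ^ (T - #M) * ‖(∑ t ∈ M, z t) / #M - μ‖ ^ 2 else 0)
        = K #M * ‖∑ t ∈ M, (z t - μ)‖ ^ 2 := by
    intro M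
    split_ifs with hM
    · rw [sum_div_card_sub hM, norm_div, Complex.norm_natCast, div_pow]
      ring
    · simp [not_nonempty_iff_eq_empty.1 hM]
  rw [sum_filter, powerset_univ, sum_congr rfl fun M _ => hterm M,
    sum_card_mul_norm_sum_sq_of_sum_eq_zero K _ hw, Fintype.card_fin]
  congr 2 <;> refine sum_congr rfl fun n _ => ?_ <;> simp only [K, nsmul_eq_mul] <;> ring

/-- **Expected squared deviation of the sample mean over a `p`-random subset.**
For `z : Fin T → ℂ` with mean `μ` and `p ∈ [0,1]`,
`Σ_{∅ ≠ M ⊆ Fin T} p^{|M|}(1−p)^{T−|M|} |(1/|M|) Σ_{t∈M} z_t − μ|²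
  = (Σ_t |z_t − μ|²) (Σ_{n=1}^T p^n (1−p)^{T−n} C(T−1,n−1)/n²
      − Σ_{n=2}^T p^n (1−p)^{T−n} C(T−2,n−2)/n²)`. -/
theorem random_subset_mean_variance (T : ℕ) (hT : 2 ≤ T) (z : Fin T → ℂ)
    (μ : ℂ) (hμ : μ = (∑ t, z t) / (T : ℂ))
    (p : ℝ) (hp0 : 0 ≤ p) (hp1 : p ≤ 1) :
    ∑ M ∈ (Finset.univ : Finset (Fin T)).powerset.filter (fun M => M.Nonempty),
        p ^ M.card * (1 - p) ^ (T - M.card) *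
          ‖(∑ t ∈ M, z t) / (M.card : ℂ) - μ‖ ^ 2
      = (∑ t, ‖z t - μ‖ ^ 2) *
          ((∑ n ∈ Finset.Icc 1 T,
              p ^ n * (1 - p) ^ (T - n) * ((T - 1).choose (n - 1) : ℝ) / (n ^ 2 : ℝ))
            - (∑ n ∈ Finset.Icc 2 T,
              p ^ n * (1 - p) ^ (T - n) * ((T - 2).choose (n - 2) : ℝ) / (n ^ 2 : ℝ))) :=
  random_subset_mean_variance_general T z μ hμ p
end

section
/- Let T ≥ 2, let z : Fin T → ℂ with |z_t| = 1 for all t, let μ = (1/T)·Σ_t z_t, let p ∈ (0,1) and δ > 0. Then Σ over all nonempty subsets M ⊆ Fin T satisfying |(1/|M|)·Σ_{t∈M} z_t − μ| ≥ δ of p^{|M|}(1−p)^{T−|M|} ≤ (2/δ²) · Σ_{n=1}^{T} (p^n/n)·(1−p)^{T−n}·C(T, n). (Probabilistically: a Chebyshev-type bound on the probability that the sample mean over a p-random subset deviates from μ by at least δ.) -/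
/-!
Group the subsets by their size `n`. With `w t = z t - μ` we have `∑ t, w t = 0` and
`∑ t, ‖w t‖² = T - T‖μ‖² ≤ T`. Expanding `‖∑ t ∈ M, w t‖²` and summing over all `n`-subsets `M`,
the pair `(s, t)` is counted `C(T - 1, n - 1)` times if `s = t` and a number `b` independent of
`s ≠ t` otherwise, so the sum equals `(C(T - 1, n - 1) - b) ∑ t, ‖w t‖² ≤ C(T - 1, n - 1) T
= n C(T, n)`: the off-diagonal terms add up to `b (‖∑ t, w t‖² - ∑ t, ‖w t‖²)`. By Chebyshev's
inequality at most `C(T, n) / (n δ²)` of the `n`-subsets have a sample mean at distance `≥ δ`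
from `μ`; weighting by `p^n (1-p)^(T-n)` gives the bound, even with `1` in place of `2`.
-/

open scoped Classical

open Finset
open scoped RealInnerProductSpace

namespace Finset

theorem card_filter_powersetCard_subset_eq_ite {α : Type*} [DecidableEq α] (s t : Finset α)
    (n : ℕ) (hst : s ⊆ t) :
    #{M ∈ t.powersetCard n | s ⊆ M} = if #s ≤ n then (#t - #s).choose (n - #s) else 0 := by
  split_ifs with hsn
  · exact card_filter_powersetCard_subset s t n hst hsn
  · rw [card_eq_zero, filter_eq_empty_iff]
    intro M hM hsM
    exact hsn ((card_le_card hsM).trans (mem_powersetCard.1 hM).2.le)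

theorem sum_sum_mem_sum_mem_eq_sum_sum_card_smul {α β : Type*} [Fintype α] [DecidableEq α]
    [AddCommMonoid β] (P : Finset (Finset α)) (f : α → α → β) :
    ∑ M ∈ P, ∑ s ∈ M, ∑ t ∈ M, f s t = ∑ s, ∑ t, #{M ∈ P | {s, t} ⊆ M} • f s t := by
  have h (M : Finset α) :
      ∑ s ∈ M, ∑ t ∈ M, f s t = ∑ s, ∑ t, if {s, t} ⊆ M then f s t else 0 := by
    simp only [insert_subset_iff, singleton_subset_iff, ite_and, sum_ite_irrel, sum_ite_mem,
      univ_inter, sum_const_zero]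
  simp_rw [h, sum_comm (s := P), ← sum_filter, sum_const]

theorem card_filter_le_mul_sq_le_sum_sq {ι : Type*} (s : Finset ι) (g : ι → ℝ) {a : ℝ}
    (ha : 0 ≤ a) :
    #{x ∈ s | a ≤ g x} * a ^ 2 ≤ ∑ x ∈ s, g x ^ 2 := by
  calc #{x ∈ s | a ≤ g x} * a ^ 2 = ∑ x ∈ s with a ≤ g x, a ^ 2 := by
        rw [sum_const, nsmul_eq_mul]
    _ ≤ ∑ x ∈ s with a ≤ g x, g x ^ 2 :=
        sum_le_sum fun x hx => pow_le_pow_left₀ ha (mem_filter.1 hx).2 2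
    _ ≤ ∑ x ∈ s, g x ^ 2 :=
        sum_le_sum_of_subset_of_nonneg (filter_subset _ _) fun _ _ _ => sq_nonneg _

end Finset

section InnerProductSpace

variable {α E : Type*} [Fintype α] [NormedAddCommGroup E] [InnerProductSpace ℝ E]

theorem sum_sum_ite_mul_inner_of_sum_eq_zero [DecidableEq α] {w : α → E} (hw : ∑ t, w t = 0)
    (a b : ℝ) :
    ∑ s, ∑ t, (if s = t then a else b) * ⟪w s, w t⟫ = (a - b) * ∑ t, ‖w t‖ ^ 2 := by
  have hsplit (s t : α) : (if s = t then a else b) * ⟪w s, w t⟫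
      = b * ⟪w s, w t⟫ + if s = t then (a - b) * ‖w s‖ ^ 2 else 0 := by
    split_ifs with hst
    · rw [hst, real_inner_self_eq_norm_sq]; ring
    · ring
  simp only [hsplit, sum_add_distrib, ← mul_sum, ← inner_sum, hw, inner_zero_right, mul_zero,
    sum_ite_eq, mem_univ, if_true, zero_add]

theorem sum_norm_sub_sq_le_sum_norm_sq {z : α → E} {μ : E}
    (hμ : ∑ t, z t = Fintype.card α • μ) :
    ∑ t, ‖z t - μ‖ ^ 2 ≤ ∑ t, ‖z t‖ ^ 2 := by
  have hcross : ∑ t, ⟪z t, μ⟫ = Fintype.card α * ‖μ‖ ^ 2 := by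
    rw [← sum_inner, hμ, ← Nat.cast_smul_eq_nsmul ℝ, real_inner_smul_left,
      real_inner_self_eq_norm_sq]
  simp only [norm_sub_sq_real, sum_add_distrib, sum_sub_distrib, ← mul_sum, hcross, sum_const,
    card_univ, nsmul_eq_mul]
  nlinarith [sq_nonneg ‖μ‖, (Fintype.card α).cast_nonneg (α := ℝ)]

theorem sum_powersetCard_norm_sum_sq_le [DecidableEq α] {w : α → E} (hw : ∑ t, w t = 0)
    {n : ℕ} (hn : 1 ≤ n) :
    ∑ M ∈ univ.powersetCard n, ‖∑ t ∈ M, w t‖ ^ 2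
      ≤ (Fintype.card α - 1).choose (n - 1) * ∑ t, ‖w t‖ ^ 2 := by
  set c : ℕ := if 2 ≤ n then (Fintype.card α - 2).choose (n - 2) else 0
  have hcount (s t : α) : (#{M ∈ univ.powersetCard n | {s, t} ⊆ M} : ℝ)
      = if s = t then ((Fintype.card α - 1).choose (n - 1) : ℝ) else c := by
    rw [card_filter_powersetCard_subset_eq_ite _ _ _ (subset_univ _), card_univ]
    by_cases hst : s = t
    · simp [hst, hn]
    · simp [hst, card_pair hst, c]
  calc ∑ M ∈ univ.powersetCard n, ‖∑ t ∈ M, w t‖ ^ 2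
      = ∑ M ∈ univ.powersetCard n, ∑ s ∈ M, ∑ t ∈ M, ⟪w s, w t⟫ := by
        simp_rw [← real_inner_self_eq_norm_sq, sum_inner, inner_sum]
    _ = ∑ s, ∑ t, (#{M ∈ univ.powersetCard n | {s, t} ⊆ M} : ℝ) * ⟪w s, w t⟫ := by
        simp_rw [sum_sum_mem_sum_mem_eq_sum_sum_card_smul, nsmul_eq_mul]
    _ = ((Fintype.card α - 1).choose (n - 1) - c) * ∑ t, ‖w t‖ ^ 2 := by
        simp_rw [hcount]
        exact sum_sum_ite_mul_inner_of_sum_eq_zero hw _ _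
    _ ≤ (Fintype.card α - 1).choose (n - 1) * ∑ t, ‖w t‖ ^ 2 := by
        gcongr
        exact sub_le_self _ c.cast_nonneg

theorem card_filter_le_norm_sum_sub_mul_sq_le [DecidableEq α] {z : α → E} {μ : E}
    (hμ : ∑ t, z t = Fintype.card α • μ) {n : ℕ} (hn : 1 ≤ n) {δ : ℝ} (hδ : 0 ≤ δ) :
    #{M ∈ univ.powersetCard n | δ ≤ ‖∑ t ∈ M, z t - n • μ‖} * δ ^ 2
      ≤ (Fintype.card α - 1).choose (n - 1) * ∑ t, ‖z t‖ ^ 2 := by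
  have hcentered : ∑ t, (z t - μ) = 0 := by
    rw [sum_sub_distrib, hμ, sum_const, card_univ, sub_self]
  have hshift : ∀ M ∈ univ.powersetCard n, ∑ t ∈ M, z t - n • μ = ∑ t ∈ M, (z t - μ) :=
    fun M hM => by rw [sum_sub_distrib, sum_const, (mem_powersetCard.1 hM).2]
  calc #{M ∈ univ.powersetCard n | δ ≤ ‖∑ t ∈ M, z t - n • μ‖} * δ ^ 2
      = #{M ∈ univ.powersetCard n | δ ≤ ‖∑ t ∈ M, (z t - μ)‖} * δ ^ 2 := by
        rw [filter_congr fun M hM => by rw [hshift M hM]]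
    _ ≤ ∑ M ∈ univ.powersetCard n, ‖∑ t ∈ M, (z t - μ)‖ ^ 2 :=
        card_filter_le_mul_sq_le_sum_sq _ _ hδ
    _ ≤ (Fintype.card α - 1).choose (n - 1) * ∑ t, ‖z t - μ‖ ^ 2 :=
        sum_powersetCard_norm_sum_sq_le hcentered hn
    _ ≤ (Fintype.card α - 1).choose (n - 1) * ∑ t, ‖z t‖ ^ 2 :=
        mul_le_mul_of_nonneg_left (sum_norm_sub_sq_le_sum_norm_sq hμ) (Nat.cast_nonneg _)

end InnerProductSpace

theorem sum_powerset_filter_nonempty_eq_sum_Icc {α β : Type*} [Fintype α] [AddCommMonoid β]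
    (Q : Finset α → Prop) [DecidablePred Q] (g : ℕ → β) :
    ∑ M ∈ univ.powerset with M.Nonempty ∧ Q M, g #M
      = ∑ n ∈ Icc 1 (Fintype.card α), #{M ∈ univ.powersetCard n | Q M} • g n := by
  rw [← sum_fiberwise_of_maps_to' (g := card) (t := Icc 1 (Fintype.card α))]
  · refine sum_congr rfl fun n hn => ?_
    rw [sum_const, filter_filter]
    congr 2
    ext M
    simp only [mem_filter, mem_powerset, mem_powersetCard, subset_univ, true_and]
    constructor
    · rintro ⟨⟨-, hQ⟩, hM⟩
      exact ⟨hM, hQ⟩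
    · rintro ⟨hM, hQ⟩
      exact ⟨⟨card_pos.1 (hM ▸ (mem_Icc.1 hn).1), hQ⟩, hM⟩
  · intro M hM
    simp only [mem_filter, mem_powerset] at hM
    exact mem_Icc.2 ⟨hM.2.1.card_pos, card_le_univ M⟩

theorem card_filter_le_norm_mean_sub_le {α : Type*} [Fintype α] {z : α → ℂ}
    (hz : ∀ t, ‖z t‖ = 1) {μ : ℂ} (hμ : μ = (∑ t, z t) / (Fintype.card α : ℂ)) {n : ℕ}
    (hn : n ∈ Icc 1 (Fintype.card α)) {δ : ℝ} (hδ : 0 < δ) :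
    (#{M ∈ univ.powersetCard n | δ ≤ ‖(∑ t ∈ M, z t) / (#M : ℂ) - μ‖} : ℝ)
      ≤ (Fintype.card α).choose n / (n * δ ^ 2) := by
  obtain ⟨hn1, hnN⟩ := mem_Icc.1 hn
  have hnpos : (0 : ℝ) < n := by exact_mod_cast hn1
  have hsum : ∑ t, z t = Fintype.card α • μ := by
    rw [hμ, nsmul_eq_mul, mul_div_cancel₀]
    exact Nat.cast_ne_zero.2 (by omega)
  have hdev : ∀ M ∈ univ.powersetCard n,
      δ ≤ ‖(∑ t ∈ M, z t) / (#M : ℂ) - μ‖ ↔ δ * n ≤ ‖∑ t ∈ M, z t - n • μ‖ := by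
    intro M hM
    have hnC : (n : ℂ) ≠ 0 := by exact_mod_cast hnpos.ne'
    rw [(mem_powersetCard.1 hM).2, nsmul_eq_mul, ← le_div_iff₀ hnpos, div_sub' hnC, norm_div,
      Complex.norm_natCast]
  have hnorms : ∑ t, ‖z t‖ ^ 2 = Fintype.card α := by simp [hz]
  have hchoose : ((Fintype.card α - 1).choose (n - 1) : ℝ) * Fintype.card α
      = n * (Fintype.card α).choose n := by
    have h := Nat.add_one_mul_choose_eq (Fintype.card α - 1) (n - 1)
    rw [Nat.sub_add_cancel (hn1.trans hnN), Nat.sub_add_cancel hn1] at h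
    rw [mul_comm, mul_comm (n : ℝ)]
    exact_mod_cast h
  have hcheb := card_filter_le_norm_sum_sub_mul_sq_le hsum hn1 (by positivity : 0 ≤ δ * n)
  rw [hnorms, hchoose, ← filter_congr hdev] at hcheb
  rw [le_div_iff₀ (by positivity)]
  nlinarith

theorem chebyshev_random_subset_bound_general (T : ℕ) (z : Fin T → ℂ)
    (hz : ∀ t, ‖z t‖ = 1)
    (μ : ℂ) (hμ : μ = (∑ t, z t) / (T : ℂ))
    (p : ℝ) (hp0 : 0 < p) (hp1 : p < 1) (δ : ℝ) (hδ : 0 < δ) :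
    ∑ M ∈ (Finset.univ : Finset (Fin T)).powerset.filter
        (fun M => M.Nonempty ∧
          δ ≤ ‖(∑ t ∈ M, z t) / (M.card : ℂ) - μ‖),
        p ^ M.card * (1 - p) ^ (T - M.card)
      ≤ (2 / δ ^ 2) *
          ∑ n ∈ Finset.Icc 1 T, (p ^ n / n) * (1 - p) ^ (T - n) * (T.choose n : ℝ) := by
  have hq : 0 ≤ 1 - p := sub_nonneg.2 hp1.le
  have hweight (n : ℕ) : 0 ≤ p ^ n * (1 - p) ^ (T - n) :=
    mul_nonneg (pow_nonneg hp0.le _) (pow_nonneg hq _)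
  have hμ' : μ = (∑ t, z t) / (Fintype.card (Fin T) : ℂ) := by rw [hμ, Fintype.card_fin]
  calc _ = ∑ n ∈ Icc 1 T, #{M ∈ univ.powersetCard n |
          δ ≤ ‖(∑ t ∈ M, z t) / (#M : ℂ) - μ‖} * (p ^ n * (1 - p) ^ (T - n)) := by
        simpa [nsmul_eq_mul] using sum_powerset_filter_nonempty_eq_sum_Icc
          (fun M => δ ≤ ‖(∑ t ∈ M, z t) / (#M : ℂ) - μ‖) fun n => p ^ n * (1 - p) ^ (T - n)
    _ ≤ ∑ n ∈ Icc 1 T, T.choose n / (n * δ ^ 2) * (p ^ n * (1 - p) ^ (T - n)) := by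
        refine sum_le_sum fun n hn => mul_le_mul_of_nonneg_right ?_ (hweight n)
        simpa using card_filter_le_norm_mean_sub_le hz hμ' (by simpa using hn) hδ
    _ ≤ _ := by
        rw [mul_sum]
        refine sum_le_sum fun n _ => ?_
        have hterm : T.choose n / (n * δ ^ 2) * (p ^ n * (1 - p) ^ (T - n))
            = 1 / δ ^ 2 * (p ^ n / n * (1 - p) ^ (T - n) * T.choose n) := by
          ring
        rw [hterm]
        have hterm_nonneg : 0 ≤ p ^ n / n * (1 - p) ^ (T - n) * T.choose n :=
          mul_nonneg (mul_nonneg (div_nonneg (pow_nonneg hp0.le n) n.cast_nonneg)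
            (pow_nonneg hq _)) (Nat.cast_nonneg _)
        exact mul_le_mul_of_nonneg_right (by gcongr; norm_num) hterm_nonneg

/-- **Chebyshev-type bound for the sample mean over a `p`-random subset.**
For unimodular `z : Fin T → ℂ` with mean `μ`, `p ∈ (0,1)` and `δ > 0`, the
total weight of nonempty subsets `M` whose sample mean deviates from `μ` by at
least `δ` is at most `(2/δ²) Σ_{n=1}^T (p^n/n)(1−p)^{T−n} C(T,n)`. -/
theorem chebyshev_random_subset_bound (T : ℕ) (hT : 2 ≤ T) (z : Fin T → ℂ)
    (hz : ∀ t, ‖z t‖ = 1)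
    (μ : ℂ) (hμ : μ = (∑ t, z t) / (T : ℂ))
    (p : ℝ) (hp0 : 0 < p) (hp1 : p < 1) (δ : ℝ) (hδ : 0 < δ) :
    ∑ M ∈ (Finset.univ : Finset (Fin T)).powerset.filter
        (fun M => M.Nonempty ∧
          δ ≤ ‖(∑ t ∈ M, z t) / (M.card : ℂ) - μ‖),
        p ^ M.card * (1 - p) ^ (T - M.card)
      ≤ (2 / δ ^ 2) *
          ∑ n ∈ Finset.Icc 1 T, (p ^ n / n) * (1 - p) ^ (T - n) * (T.choose n : ℝ) :=
  chebyshev_random_subset_bound_general T z hz μ hμ p hp0 hp1 δ hδ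
end

section
/- For every T ≥ 1 and every real number p: Σ_{n=1}^{T} (p^n/n)·(1−p)^{T−n}·C(T,n) = Σ_{n=0}^{T−1} ((1−p)^{T−n−1} − (1−p)^{T})/(n+1), where C(T,n) denotes the binomial coefficient. -/
/-!
Both sides, as functions `S T`, satisfy `S 0 = 0` and
`S (T + 1) = (1 - p) * S T + (1 - (1 - p) ^ (T + 1)) / (T + 1)`.
For the left side this is Pascal's rule in the form
`C(T+1, n) / n = C(T, n) / n + C(T+1, n) / (T + 1)`, followed by the binomial theorem.
-/

open Finset

theorem sum_range_succ_eq_add_sum_Icc_one {M : Type*} [AddCommMonoid M] (f : ℕ → M) (T : ℕ) :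
    ∑ n ∈ range (T + 1), f n = f 0 + ∑ n ∈ Icc 1 T, f n := by
  rw [Nat.range_succ_eq_Icc_zero, ← add_sum_Ioc_eq_sum_Icc (Nat.zero_le T),
    ← Icc_add_one_left_eq_Ioc, zero_add]

theorem sum_Icc_one_pow_mul_pow_mul_choose_add_pow {R : Type*} [CommSemiring R] (x y : R) (T : ℕ) :
    ∑ n ∈ Icc 1 T, x ^ n * y ^ (T - n) * T.choose n + y ^ T = (x + y) ^ T := by
  rw [add_pow, sum_range_succ_eq_add_sum_Icc_one, add_comm]
  simp

theorem Nat.cast_succ_choose_div {K : Type*} [Field K] [CharZero K] {T n : ℕ} (hn : n ≠ 0)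
    (hnT : n ≤ T + 1) :
    ((T + 1).choose n : K) / n = T.choose n / n + (T + 1).choose n / (T + 1) := by
  have key : (T.choose n * (T + 1) : K) = (T + 1).choose n * (T + 1 - n) := by
    exact_mod_cast Nat.choose_mul_succ_eq T n
  have hn' : (n : K) ≠ 0 := Nat.cast_ne_zero.mpr hn
  have hT : (T + 1 : K) ≠ 0 := Nat.cast_add_one_ne_zero T
  rw [div_add_div _ _ hn' hT, div_eq_div_iff hn' (mul_ne_zero hn' hT)]
  linear_combination -(n : K) * key

theorem sum_Icc_one_pow_div_mul_pow_mul_choose_succ {K : Type*} [Field K] [CharZero K] (p : K)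
    (T : ℕ) :
    ∑ n ∈ Icc 1 (T + 1), (p ^ n / n) * (1 - p) ^ (T + 1 - n) * ((T + 1).choose n : K)
      = (1 - p) * ∑ n ∈ Icc 1 T, (p ^ n / n) * (1 - p) ^ (T - n) * (T.choose n : K)
        + (1 - (1 - p) ^ (T + 1)) / (T + 1) := by
  have pascal : ∀ n ∈ Icc 1 (T + 1),
      (p ^ n / n) * (1 - p) ^ (T + 1 - n) * ((T + 1).choose n : K)
        = (p ^ n / n) * (1 - p) ^ (T + 1 - n) * T.choose n
          + p ^ n * (1 - p) ^ (T + 1 - n) * (T + 1).choose n / (T + 1) := by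
    intro n hn
    obtain ⟨hn0, hnT⟩ := mem_Icc.mp hn
    have hdiv := Nat.cast_succ_choose_div (K := K) (by omega : n ≠ 0) hnT
    calc (p ^ n / n) * (1 - p) ^ (T + 1 - n) * ((T + 1).choose n : K)
        = p ^ n * (1 - p) ^ (T + 1 - n) * (((T + 1).choose n : K) / n) := by ring
      _ = _ := by rw [hdiv]; ring
  have shrink : ∑ n ∈ Icc 1 (T + 1), (p ^ n / n) * (1 - p) ^ (T + 1 - n) * (T.choose n : K)
      = (1 - p) * ∑ n ∈ Icc 1 T, (p ^ n / n) * (1 - p) ^ (T - n) * (T.choose n : K) := by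
    rw [sum_Icc_succ_top (by omega), Nat.choose_succ_self, Nat.cast_zero, mul_zero, add_zero,
      mul_sum]
    refine sum_congr rfl fun n hn => ?_
    rw [show T + 1 - n = T - n + 1 by grind, pow_succ]
    ring
  have binomial : ∑ n ∈ Icc 1 (T + 1), p ^ n * (1 - p) ^ (T + 1 - n) * ((T + 1).choose n : K)
      = 1 - (1 - p) ^ (T + 1) := by
    rw [eq_sub_iff_add_eq, sum_Icc_one_pow_mul_pow_mul_choose_add_pow, add_sub_cancel, one_pow]
  rw [sum_congr rfl pascal, sum_add_distrib, shrink, ← sum_div, binomial]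

theorem sum_range_pow_sub_pow_div_succ {K : Type*} [Field K] (q : K) (T : ℕ) :
    ∑ n ∈ range (T + 1), (q ^ (T + 1 - n - 1) - q ^ (T + 1)) / (n + 1)
      = q * ∑ n ∈ range T, (q ^ (T - n - 1) - q ^ T) / (n + 1) + (1 - q ^ (T + 1)) / (T + 1) := by
  rw [sum_range_succ, mul_sum, show T + 1 - T - 1 = 0 by omega, pow_zero]
  congr 1
  refine sum_congr rfl fun n hn => ?_
  rw [show T + 1 - n - 1 = T - n - 1 + 1 by grind, pow_succ, pow_succ]
  ring

theorem weighted_binomial_sum_identity_general (T : ℕ) (p : ℝ) :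
    ∑ n ∈ Finset.Icc 1 T, (p ^ n / n) * (1 - p) ^ (T - n) * (T.choose n : ℝ)
      = ∑ n ∈ Finset.range T, ((1 - p) ^ (T - n - 1) - (1 - p) ^ T) / (n + 1) := by
  induction T with
  | zero => simp
  | succ T ih =>
    rw [sum_Icc_one_pow_div_mul_pow_mul_choose_succ, ih, sum_range_pow_sub_pow_div_succ]

/-- **A weighted binomial sum identity.**
For every `T ≥ 1` and real `p`:
`Σ_{n=1}^T (p^n/n)(1−p)^{T−n} C(T,n) = Σ_{n=0}^{T−1} ((1−p)^{T−n−1} − (1−p)^T)/(n+1)`. -/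
theorem weighted_binomial_sum_identity (T : ℕ) (hT : 1 ≤ T) (p : ℝ) :
    ∑ n ∈ Finset.Icc 1 T, (p ^ n / n) * (1 - p) ^ (T - n) * (T.choose n : ℝ)
      = ∑ n ∈ Finset.range T, ((1 - p) ^ (T - n - 1) - (1 - p) ^ T) / (n + 1) :=
  weighted_binomial_sum_identity_general T p
end

section
/- Let T ≥ 1, let p ∈ (0,1), and let s be a natural number with 1 ≤ s ≤ T. Then Σ_{n=1}^{T} (p^n/n)·(1−p)^{T−n}·C(T,n) ≤ s·(1−p)^{T−s} + 1/(s·p), where C(T,n) denotes the binomial coefficient. -/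
/-! With `q = 1 - p`, induction on `T` (Pascal's rule and `n * C(T+1, n) = (T+1) * C(T, n-1)`) gives
`∑_{n=1}^T C(T,n) aⁿ b^(T-n) / n = ∑_{j=1}^T ((a+b)^j - b^j) b^(T-j) / j`, so for `a + b = 1` the sum
is at most `∑_{j=1}^T q^(T-j) / j`. Each term with `j ≤ s` is at most `q^(T-s)`; the terms with
`j > s` are at most `q^(T-j) / s` and form a geometric series bounded by `1 / (s p)`. -/

open Finset

theorem sum_Icc_choose_mul_pow {R : Type*} [CommRing R] (a b : R) (T : ℕ) :
    ∑ n ∈ Icc 1 T, (T.choose n : R) * a ^ n * b ^ (T - n) = (a + b) ^ T - b ^ T := by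
  rw [add_pow, range_eq_Ico, sum_eq_sum_Ico_succ_bot T.succ_pos, Nat.succ_eq_add_one,
    zero_add, Ico_add_one_right_eq_Icc]
  simp only [pow_zero, Nat.sub_zero, Nat.choose_zero_right, Nat.cast_one, one_mul, mul_one,
    add_sub_cancel_left]
  exact sum_congr rfl fun n _ => by ring

section
variable {K : Type*} [Field K] [CharZero K] (a b : K)

theorem sum_Icc_choose_pred_mul_pow_div (T : ℕ) :
    ∑ n ∈ Icc 1 (T + 1), (T.choose (n - 1) : K) * a ^ n * b ^ (T + 1 - n) / n
      = ((a + b) ^ (T + 1) - b ^ (T + 1)) / (T + 1) := by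
  rw [← sum_Icc_choose_mul_pow, sum_div]
  refine sum_congr rfl fun n hn => ?_
  obtain ⟨k, rfl⟩ : ∃ k, n = k + 1 := Nat.exists_eq_add_of_le' (mem_Icc.1 hn).1
  have h : ((T + 1 : ℕ) : K) * T.choose k = (T + 1).choose (k + 1) * (k + 1 : ℕ) := by
    exact_mod_cast Nat.add_one_mul_choose_eq T k
  field_simp
  push_cast at h ⊢
  linear_combination a ^ (k + 1) * b ^ (T - k) * h

theorem sum_Icc_choose_mul_pow_div (T : ℕ) :
    ∑ n ∈ Icc 1 T, (T.choose n : K) * a ^ n * b ^ (T - n) / n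
      = ∑ j ∈ Icc 1 T, ((a + b) ^ j - b ^ j) * b ^ (T - j) / j := by
  induction T with
  | zero => simp
  | succ T ih =>
    have hsplit : ∀ n ∈ Icc 1 (T + 1), ((T + 1).choose n : K) * a ^ n * b ^ (T + 1 - n) / n
        = (T.choose n : K) * a ^ n * b ^ (T + 1 - n) / n
          + (T.choose (n - 1) : K) * a ^ n * b ^ (T + 1 - n) / n := fun n hn => by
      rw [Nat.choose_succ_left T n (mem_Icc.1 hn).1]
      push_cast
      ring
    have hshift (f : ℕ → K) : ∑ j ∈ Icc 1 T, f j * b ^ (T + 1 - j) / j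
        = b * ∑ j ∈ Icc 1 T, f j * b ^ (T - j) / j := by
      rw [mul_sum]
      refine sum_congr rfl fun j hj => ?_
      rw [Nat.sub_add_comm (mem_Icc.1 hj).2, pow_succ]
      ring
    rw [sum_congr rfl hsplit, sum_add_distrib, sum_Icc_choose_pred_mul_pow_div,
      sum_Icc_succ_top (by omega), sum_Icc_succ_top (by omega), Nat.choose_succ_self]
    simp only [Nat.cast_zero, zero_mul, zero_div, add_zero, Nat.sub_self, pow_zero, mul_one]
    rw [hshift, hshift, ih, Nat.cast_add_one]

end

section
variable {K : Type*} [Field K] [LinearOrder K] [IsStrictOrderedRing K] {q : K}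

theorem sum_Icc_pow_sub_div_le (hq0 : 0 ≤ q) (hq1 : q ≤ 1) (s T : ℕ) :
    ∑ j ∈ Icc 1 s, q ^ (T - j) / j ≤ s * q ^ (T - s) := by
  calc ∑ j ∈ Icc 1 s, q ^ (T - j) / j ≤ ∑ _j ∈ Icc 1 s, q ^ (T - s) := by
        refine sum_le_sum fun j hj => ?_
        obtain ⟨hj1, hjs⟩ := mem_Icc.1 hj
        calc q ^ (T - j) / j ≤ q ^ (T - j) :=
              div_le_self (pow_nonneg hq0 _) (by exact_mod_cast hj1)
          _ ≤ q ^ (T - s) := pow_le_pow_of_le_one hq0 hq1 (by omega)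
    _ = s * q ^ (T - s) := by simp

theorem sum_Ioc_pow_sub_div_le (hq0 : 0 ≤ q) (hq1 : q < 1) {s : ℕ} (hs : 0 < s) (T : ℕ) :
    ∑ j ∈ Ioc s T, q ^ (T - j) / j ≤ 1 / (s * (1 - q)) := by
  have hreflect : ∑ j ∈ Ioc s T, q ^ (T - j) = ∑ i ∈ Ico 0 (T - s), q ^ i :=
    sum_nbij' (T - ·) (T - ·) (by intro j; simp; omega) (by intro i; simp; omega)
      (by intro j; simp; omega) (by intro i; simp; omega) (fun _ _ => rfl)
  have hs' : (0 : K) < s := by exact_mod_cast hs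
  calc ∑ j ∈ Ioc s T, q ^ (T - j) / j ≤ ∑ j ∈ Ioc s T, q ^ (T - j) / s := by
        refine sum_le_sum fun j hj => ?_
        exact div_le_div_of_nonneg_left (pow_nonneg hq0 _) hs'
          (by exact_mod_cast (mem_Ioc.1 hj).1.le)
    _ = (∑ i ∈ Ico 0 (T - s), q ^ i) / s := by rw [← sum_div, hreflect]
    _ ≤ q ^ 0 / (1 - q) / s := by gcongr; exact geom_sum_Ico_le_of_lt_one hq0 hq1
    _ = 1 / (s * (1 - q)) := by rw [pow_zero, div_div, mul_comm]

theorem sum_Icc_pow_sub_div_le_add (hq0 : 0 ≤ q) (hq1 : q < 1) {s T : ℕ} (hs : 1 ≤ s)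
    (hsT : s ≤ T) :
    ∑ j ∈ Icc 1 T, q ^ (T - j) / j ≤ s * q ^ (T - s) + 1 / (s * (1 - q)) := by
  have hIoc (n : ℕ) : Icc 1 n = Ioc 0 n := Icc_add_one_left_eq_Ioc 0 n
  rw [hIoc, ← sum_Ioc_consecutive _ s.zero_le hsT, ← hIoc]
  exact add_le_add (sum_Icc_pow_sub_div_le hq0 hq1.le s T) (sum_Ioc_pow_sub_div_le hq0 hq1 hs T)
end

theorem weighted_binomial_sum_tail_bound_general (T : ℕ)
    (p : ℝ) (hp0 : 0 < p) (hp1 : p < 1)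
    (s : ℕ) (hs1 : 1 ≤ s) (hs2 : s ≤ T) :
    ∑ n ∈ Finset.Icc 1 T, (p ^ n / n) * (1 - p) ^ (T - n) * (T.choose n : ℝ)
      ≤ (s : ℝ) * (1 - p) ^ (T - s) + 1 / (s * p) := by
  have hq0 : 0 ≤ 1 - p := by linarith
  calc ∑ n ∈ Icc 1 T, (p ^ n / n) * (1 - p) ^ (T - n) * (T.choose n : ℝ)
      = ∑ n ∈ Icc 1 T, (T.choose n : ℝ) * p ^ n * (1 - p) ^ (T - n) / n :=
        sum_congr rfl fun _ _ => by ring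
    _ = ∑ j ∈ Icc 1 T, (1 - (1 - p) ^ j) * (1 - p) ^ (T - j) / j := by
        simp only [sum_Icc_choose_mul_pow_div, add_sub_cancel, one_pow]
    _ ≤ ∑ j ∈ Icc 1 T, (1 - p) ^ (T - j) / j := by
        gcongr with j
        exact mul_le_of_le_one_left (pow_nonneg hq0 _) (sub_le_self _ (pow_nonneg hq0 _))
    _ ≤ s * (1 - p) ^ (T - s) + 1 / (s * (1 - (1 - p))) :=
        sum_Icc_pow_sub_div_le_add hq0 (by linarith) hs1 hs2
    _ = s * (1 - p) ^ (T - s) + 1 / (s * p) := by rw [sub_sub_cancel]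

/-- **Tail estimate for the weighted binomial sum.**
For `T ≥ 1`, `p ∈ (0,1)` and `1 ≤ s ≤ T`:
`Σ_{n=1}^T (p^n/n)(1−p)^{T−n} C(T,n) ≤ s (1−p)^{T−s} + 1/(s p)`. -/
theorem weighted_binomial_sum_tail_bound (T : ℕ) (hT : 1 ≤ T)
    (p : ℝ) (hp0 : 0 < p) (hp1 : p < 1)
    (s : ℕ) (hs1 : 1 ≤ s) (hs2 : s ≤ T) :
    ∑ n ∈ Finset.Icc 1 T, (p ^ n / n) * (1 - p) ^ (T - n) * (T.choose n : ℝ)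
      ≤ (s : ℝ) * (1 - p) ^ (T - s) + 1 / (s * p) :=
  weighted_binomial_sum_tail_bound_general T p hp0 hp1 s hs1 hs2
end
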